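/- arXiv:1607.00636 — 3 statements merged into one kernel-verified Lean document; each statement's English description precedes it below -/
import Mathlib

section
/- The characteristic polynomial of the matrix JB, where B is the 4×4 matrix B = [[1,0,0,1],[0,1,-1,0],[0,-1,-2μ,0],[1,0,0,μ]] and J is the standard 4×4 symplectic matrix, equals λ⁴ + (2-μ)λ² + (1-μ)(1+2μ). -/
open Polynomial Matrix

theorem robe_charpoly_JB (μ : ℝ) :
    let J : Matrix (Fin 4) (Fin 4) ℝ :=
      !![0, 0, -1, 0; 0, 0, 0, -1; 1, 0, 0, 0; 0, 1, 0, 0]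
    let B : Matrix (Fin 4) (Fin 4) ℝ :=
      !![1, 0, 0, 1; 0, 1, -1, 0; 0, -1, -2*μ, 0; 1, 0, 0, μ]
    (J * B).charpoly = X^4 + C (2 - μ) * X^2 + C ((1 - μ) * (1 + 2*μ)) := by
  intro J B
  show (J * B).charpoly = _
  have hJB : J * B = !![0, 1, 2*μ, 0; -1, 0, 0, -μ; 1, 0, 0, 1; 0, 1, -1, 0] := by
    ext i j
    fin_cases i <;> fin_cases j <;>
      simp [Matrix.mul_apply, Fin.sum_univ_four, J, B]
  rw [hJB, Matrix.charpoly]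
  have hC : charmatrix (!![0, 1, 2*μ, 0; -1, 0, 0, -μ; 1, 0, 0, 1; 0, 1, -1, 0] : Matrix (Fin 4) (Fin 4) ℝ) =
      !![X, -C 1, -C (2*μ), 0; C 1, X, 0, C μ; -C 1, 0, X, -C 1; 0, -C 1, C 1, X] := by
    ext i j
    fin_cases i <;> fin_cases j <;>
      simp [charmatrix_apply, Matrix.one_apply]
  rw [hC]
  simp [Matrix.det_succ_row_zero, Fin.sum_univ_succ, show ((2:Fin 4).succAbove 2) = 3 from rfl, show ((1:Fin 4).succAbove 2) = 3 from rfl]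
  rw [map_ofNat C 2]
  ring
end

section
/- For μ ∈ [0,1] and half-integers n+1/2 with n ∈ ℕ, the system (n+1/2)²·a - 2(n+1/2) + (1+2μ)·a = 0 and (n+1/2)² - 2(n+1/2)·a + 1 - μ = 0 has a solution a ∈ ℝ if and only if 2μ² - ((n+1/2)²+1)μ - ((n+1/2)²-1)² = 0. -/
theorem robe_kernel_system (μ : ℝ) (hμ : μ ∈ Set.Icc (0:ℝ) 1) (n : ℕ) :
    (∃ a : ℝ, ((n : ℝ) + 1/2)^2 * a - 2*((n : ℝ) + 1/2) + (1 + 2*μ) * a = 0 ∧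
        ((n : ℝ) + 1/2)^2 - 2*((n : ℝ) + 1/2) * a + 1 - μ = 0) ↔
    2*μ^2 - (((n : ℝ) + 1/2)^2 + 1)*μ - (((n : ℝ) + 1/2)^2 - 1)^2 = 0 := by
  obtain ⟨h0, h1⟩ := hμ
  set s : ℝ := (n : ℝ) + 1/2 with hs
  have hd : s^2 + 1 + 2*μ > 0 := by positivity
  constructor
  · rintro ⟨a, e1, e2⟩
    linear_combination (-2*s)*e1 - (s^2+1+2*μ)*e2
  · intro h
    refine ⟨2*s/(s^2+1+2*μ), ?_, ?_⟩
    · field_simp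
      ring
    · field_simp
      nlinarith [sq_nonneg s]
end

section
/- The equation 2μ² - ((n+1/2)²+1)μ - ((n+1/2)²-1)² = 0 with μ ∈ [0,1] and n ∈ ℕ holds only when n = 0 and μ = (5+√97)/16. -/
theorem robe_degenerate_only_mu_star (n : ℕ) (μ : ℝ) (hμ : μ ∈ Set.Icc (0:ℝ) 1)
    (h : 2*μ^2 - (((n : ℝ) + 1/2)^2 + 1)*μ - (((n : ℝ) + 1/2)^2 - 1)^2 = 0) :
    n = 0 ∧ μ = (5 + Real.sqrt 97)/16 := by
  obtain ⟨h0, h1⟩ := hμ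
  rcases Nat.eq_zero_or_pos n with hn | hn
  · subst hn
    refine ⟨rfl, ?_⟩
    simp only [Nat.cast_zero] at h
    have hs : Real.sqrt 97 ^ 2 = 97 := Real.sq_sqrt (by norm_num)
    have hs9 : Real.sqrt 97 ≥ 9 := by
      nlinarith [Real.sqrt_nonneg 97, hs]
    have key : (16*μ - 5 - Real.sqrt 97) * (16*μ - 5 + Real.sqrt 97) = 0 := by
      nlinarith [hs, h]
    rcases mul_eq_zero.mp key with hk | hk
    · linarith
    · linarith
  · exfalso
    have hn1 : (1:ℝ) ≤ (n:ℝ) := by exact_mod_cast hn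
    nlinarith [sq_nonneg ((n:ℝ)+1/2), sq_nonneg μ, sq_nonneg ((n:ℝ)-1)]
end
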